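/- Let A : ℝ³ → ℝ³ and Φ : ℝ³ → ℝ be functions of x alone: A¹ = 0, A² = F₂(x), A³ = F₃(x), Φ = G(x), with F₂, F₃, G of class C¹. Then along any solution of ẍⁱ = Σⱼ ẋʲ(∂ⱼAⁱ − ∂ᵢAʲ) − ∂ᵢΦ, the quantities I₁ = ẏ + F₂(x) and I₂ = ż + F₃(x) are constant in time, and moreover H = ½(ẋ² + ẏ² + ż²) + G(x) is constant. -/

import Mathlib

/-!
Since the potentials depend on `x` alone, `∂_y` and `∂_z` of every potential vanish, so the
`y`- and `z`-components of the force reduce to `-ẋ F₂'(x)` and `-ẋ F₃'(x)`, which are exactly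
minus the time derivatives of `F₂(x(t))` and `F₃(x(t))`. For the energy, the magnetic part
`Σⱼ ẋʲ(∂ᵢAʲ − ∂ⱼAⁱ)` is antisymmetric in `(i, j)` and so does no work: `Σᵢ ẋⁱ ẍⁱ = -ẋ G'(x)`.
-/

/-- Partial derivative `∂ⱼ f (p)`, via the one-variable derivative along the `j`-th axis. -/
noncomputable def pd (j : Fin 3) (f : (Fin 3 → ℝ) → ℝ) (p : Fin 3 → ℝ) : ℝ :=
  deriv (fun s => f (Function.update p j s)) (p j)

noncomputable def lorentzForce (A : Fin 3 → (Fin 3 → ℝ) → ℝ) (Φ : (Fin 3 → ℝ) → ℝ)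
    (p w : Fin 3 → ℝ) (i : Fin 3) : ℝ :=
  (∑ j, w j * (pd i (A j) p - pd j (A i) p)) - pd i Φ p

lemma pd_comp_apply (f : ℝ → ℝ) (i k : Fin 3) (p : Fin 3 → ℝ) :
    pd i (fun q => f (q k)) p = if i = k then deriv f (p k) else 0 := by
  unfold pd
  split_ifs with h
  · subst h
    simp only [Function.update_self]
  · simp only [Function.update_of_ne (Ne.symm h)]
    exact deriv_const _ _

lemma sum_mul_pd_comp_apply (f : ℝ → ℝ) (k : Fin 3) (p w : Fin 3 → ℝ) :
    ∑ i, w i * pd i (fun q => f (q k)) p = w k * deriv f (p k) := by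
  simp [pd_comp_apply]

lemma sum_mul_sum_mul_sub_swap_eq_zero {ι R : Type*} [Fintype ι] [CommRing R]
    (w : ι → R) (M : ι → ι → R) :
    ∑ i, w i * ∑ j, w j * (M i j - M j i) = 0 := by
  simp only [Finset.mul_sum, mul_sub, Finset.sum_sub_distrib]
  rw [sub_eq_zero, Finset.sum_comm]
  exact Finset.sum_congr rfl fun i _ => Finset.sum_congr rfl fun j _ => by ring

lemma sum_mul_lorentzForce (A : Fin 3 → (Fin 3 → ℝ) → ℝ) (Φ : (Fin 3 → ℝ) → ℝ)
    (p w : Fin 3 → ℝ) :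
    ∑ i, w i * lorentzForce A Φ p w i = -∑ i, w i * pd i Φ p := by
  have hmagnetic := sum_mul_sum_mul_sub_swap_eq_zero w (fun i j => pd i (A j) p)
  simp only [lorentzForce, mul_sub, Finset.sum_sub_distrib] at hmagnetic ⊢
  linarith

lemma lorentzForce_comp_zero_of_ne_zero (f : Fin 3 → ℝ → ℝ) (g : ℝ → ℝ)
    (p w : Fin 3 → ℝ) {i : Fin 3} (hi : i ≠ 0) :
    lorentzForce (fun j q => f j (q 0)) (fun q => g (q 0)) p w i
      = -(w 0 * deriv (f i) (p 0)) := by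
  simp [lorentzForce, pd_comp_apply, hi]

lemma hasDerivAt_add_comp_eq_zero {u y F F' : ℝ → ℝ} {y' t : ℝ}
    (hu : HasDerivAt u (-(y' * F' (y t))) t) (hy : HasDerivAt y y' t)
    (hF : HasDerivAt F (F' (y t)) (y t)) :
    HasDerivAt (fun s => u s + F (y s)) 0 t :=
  (hu.add (hF.comp t hy)).congr_deriv (by ring)

lemma hasDerivAt_half_sum_sq {v : ℝ → Fin 3 → ℝ} {a : Fin 3 → ℝ} {t : ℝ}
    (hv : ∀ i, HasDerivAt (fun s => v s i) (a i) t) :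
    HasDerivAt (fun s => (1/2) * ((v s 0)^2 + (v s 1)^2 + (v s 2)^2))
      (∑ i, v t i * a i) t := by
  have hsq : ∀ i, HasDerivAt (fun s => (v s i)^2) (2 * v t i * a i) t := fun i => by
    simpa using (hv i).fun_pow 2
  refine ((((hsq 0).add (hsq 1)).add (hsq 2)).const_mul (1/2)).congr_deriv ?_
  simp only [Fin.sum_univ_three]
  ring

/-- For potentials depending on `x` only, `A = (0, F₂(x), F₃(x))`, `Φ = G(x)`,
the quantities `I₁ = ẏ + F₂(x)`, `I₂ = ż + F₃(x)` and the energy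
`H = ½(ẋ² + ẏ² + ż²) + G(x)` are conserved along solutions of
`ẍⁱ = Σⱼ ẋʲ(∂ᵢAʲ − ∂ⱼAⁱ) − ∂ᵢΦ`. -/
theorem stmt_11
    (F₂ F₃ G F₂' F₃' G' : ℝ → ℝ)
    (hF₂ : ∀ s, HasDerivAt F₂ (F₂' s) s)
    (hF₃ : ∀ s, HasDerivAt F₃ (F₃' s) s)
    (hG : ∀ s, HasDerivAt G (G' s) s)
    (A : Fin 3 → (Fin 3 → ℝ) → ℝ) (Φ : (Fin 3 → ℝ) → ℝ)
    (hA0 : ∀ p, A 0 p = 0)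
    (hA1 : ∀ p, A 1 p = F₂ (p 0))
    (hA2 : ∀ p, A 2 p = F₃ (p 0))
    (hΦ : ∀ p, Φ p = G (p 0))
    (x v a : ℝ → Fin 3 → ℝ)
    (hx : ∀ t, HasDerivAt x (v t) t)
    (hv : ∀ t, HasDerivAt v (a t) t)
    (ode : ∀ t i, a t i =
        (∑ j, v t j * (pd i (A j) (x t) - pd j (A i) (x t))) - pd i Φ (x t)) :
    ∀ t,
      HasDerivAt (fun s => v s 1 + F₂ (x s 0)) 0 t ∧
      HasDerivAt (fun s => v s 2 + F₃ (x s 0)) 0 t ∧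
      HasDerivAt (fun s => (1/2) * ((v s 0)^2 + (v s 1)^2 + (v s 2)^2) + G (x s 0)) 0 t := by
  intro t
  have hA : A = fun j q => ![fun _ => 0, F₂, F₃] j (q 0) := by
    funext j q
    fin_cases j <;> simp [hA0, hA1, hA2]
  have hΦ' : Φ = fun q => G (q 0) := funext hΦ
  have hforce : ∀ i, a t i = lorentzForce A Φ (x t) (v t) i := ode t
  have hx0 : HasDerivAt (fun s => x s 0) (v t 0) t := hasDerivAt_pi.mp (hx t) 0
  have hvc : ∀ i, HasDerivAt (fun s => v s i) (a t i) t := hasDerivAt_pi.mp (hv t)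
  have ha1 : a t 1 = -(v t 0 * F₂' (x t 0)) := by
    rw [hforce, hA, hΦ', lorentzForce_comp_zero_of_ne_zero _ _ _ _ (by decide)]
    simp [(hF₂ _).deriv]
  have ha2 : a t 2 = -(v t 0 * F₃' (x t 0)) := by
    rw [hforce, hA, hΦ', lorentzForce_comp_zero_of_ne_zero _ _ _ _ (by decide)]
    simp [(hF₃ _).deriv]
  have hpower : ∑ i, v t i * a t i = -(v t 0 * G' (x t 0)) := by
    simp only [hforce, sum_mul_lorentzForce, hΦ', sum_mul_pd_comp_apply, (hG _).deriv]
  refine ⟨?_, ?_, ?_⟩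
  · exact hasDerivAt_add_comp_eq_zero (ha1 ▸ hvc 1) hx0 (hF₂ _)
  · exact hasDerivAt_add_comp_eq_zero (ha2 ▸ hvc 2) hx0 (hF₃ _)
  · exact hasDerivAt_add_comp_eq_zero (hpower ▸ hasDerivAt_half_sum_sq hvc) hx0 (hG _)
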